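/- Let F be a field of characteristic ≠ 2 and 𝕋 the diagonal torus of PGL₂(F). For every g ∈ PGL₂(F) not in the normalizer of 𝕋, the intersection 𝕋 ∩ 𝕋^g is trivial. -/

import Mathlib

open Matrix

variable (F : Type*) [Field F]

/-- `PGL₂(F) = GL₂(F)` modulo its center (the scalar matrices). -/
abbrev PGL2 := GL (Fin 2) F ⧸ Subgroup.center (GL (Fin 2) F)

/-- `PSL₂(F)` viewed as a subgroup of `PGL₂(F)`: the image of `SL₂(F)` under the
natural quotient map `GL₂(F) → PGL₂(F)`. -/
def PSLinPGL : Subgroup (PGL2 F) :=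
  ((QuotientGroup.mk' (Subgroup.center (GL (Fin 2) F))).comp
    (Matrix.SpecialLinearGroup.toGL :
      Matrix.SpecialLinearGroup (Fin 2) F →* GL (Fin 2) F)).range

variable {F} in
/-- The diagonal matrix `diag(a, b)` as an element of `GL₂(F)`. -/
noncomputable def glDiag (a b : Fˣ) : GL (Fin 2) F :=
  Matrix.GeneralLinearGroup.mkOfDetNeZero !![(a : F), 0; 0, (b : F)]
    (by simp [Matrix.det_fin_two_of])

/-- The homomorphism `F^× × F^× → GL₂(F)` given by diagonal matrices. -/
noncomputable def glDiagHom : Fˣ × Fˣ →* GL (Fin 2) F where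
  toFun p := glDiag p.1 p.2
  map_one' := by
    ext i j
    show (!![((1:Fˣ) : F), 0; 0, ((1:Fˣ) : F)] : Matrix _ _ F) i j = _
    fin_cases i <;> fin_cases j <;> simp
  map_mul' p q := by
    ext i j
    show (!![((p.1*q.1 : Fˣ) : F), 0; 0, ((p.2*q.2 : Fˣ) : F)] : Matrix _ _ F) i j = _
    rw [show ((glDiag p.1 p.2 * glDiag q.1 q.2 : GL (Fin 2) F) : Matrix (Fin 2) (Fin 2) F)
        = !![((p.1 : F)), 0; 0, ((p.2 : F))] * !![((q.1 : F)), 0; 0, ((q.2 : F))] from rfl,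
      Matrix.mul_fin_two]
    fin_cases i <;> fin_cases j <;> simp

/-- The diagonal torus `𝕋 ≤ PGL₂(F)`: the image of the invertible diagonal matrices. -/
noncomputable def Tpgl : Subgroup (PGL2 F) :=
  ((QuotientGroup.mk' (Subgroup.center (GL (Fin 2) F))).comp (glDiagHom F)).range

/-! If `diag(a, b)` with `a ≠ b` equals `G diag(c, d) G⁻¹` in `PGL₂(F)` with `c ≠ d`, then
`diag(a, b) G = G diag(rc, rd)` in `GL₂(F)` for a scalar `r`. Comparing entries, `G i j ≠ 0`
forces the `i`-th eigenvalue on the left to equal the `j`-th on the right; as both pairs of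
eigenvalues are distinct and `G` is invertible, `G` is diagonal or antidiagonal, and such
matrices normalize `𝕋`. -/

namespace Matrix

variable {n R : Type*} [Fintype n] [DecidableEq n] [CommRing R] [IsDomain R]

theorem apply_eq_zero_of_diagonal_mul_eq_mul_diagonal {u v : n → R} {M : Matrix n n R}
    (h : diagonal u * M = M * diagonal v) {i j : n} (hij : u i ≠ v j) : M i j = 0 := by
  have hentry := congr_fun (congr_fun h i) j
  rw [diagonal_mul, mul_diagonal, mul_comm] at hentry
  exact (mul_eq_mul_left_iff.mp hentry.symm).resolve_left hij.symm

theorem fin_two_diag_or_antidiag_of_diagonal_mul_eq_mul_diagonal {u v : Fin 2 → R}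
    {M : Matrix (Fin 2) (Fin 2) R} (hM : M.det ≠ 0) (hu : u 0 ≠ u 1) (hv : v 0 ≠ v 1)
    (h : diagonal u * M = M * diagonal v) :
    (M 0 1 = 0 ∧ M 1 0 = 0) ∨ (M 0 0 = 0 ∧ M 1 1 = 0) := by
  have zero_of {i j : Fin 2} : u i ≠ v j → M i j = 0 :=
    apply_eq_zero_of_diagonal_mul_eq_mul_diagonal h
  by_cases h00 : u 0 = v 0
  · exact .inl ⟨zero_of (h00 ▸ hv), zero_of (h00 ▸ hu.symm)⟩
  · have hM00 : M 0 0 = 0 := zero_of h00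
    have hM01 : M 0 1 ≠ 0 := fun h01 ↦ hM (by simp [det_fin_two, hM00, h01])
    have h01 : u 0 = v 1 := by_contra fun h01 ↦ hM01 (zero_of h01)
    exact .inr ⟨hM00, zero_of (h01 ▸ hu.symm)⟩

end Matrix

section Torus

variable {F}

open QuotientGroup

lemma glDiag_val (a b : Fˣ) :
    (glDiag a b : Matrix (Fin 2) (Fin 2) F) = diagonal ![(a : F), b] :=
  (diagonal_vec2 _ _).symm

lemma glDiag_mul_glDiag (a b c d : Fˣ) : glDiag a b * glDiag c d = glDiag (a * c) (b * d) :=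
  (map_mul (glDiagHom F) (a, b) (c, d)).symm

lemma glDiag_self (a : Fˣ) : glDiag a a = GeneralLinearGroup.scalar (Fin 2) a := by
  refine Units.ext ?_
  rw [glDiag_val, GeneralLinearGroup.coe_scalar, scalar_apply, diagonal_vec2, diagonal_fin_two]

lemma mk_glDiag_self (a : Fˣ) : (glDiag a a : PGL2 F) = 1 :=
  (eq_one_iff _).mpr <| by
    rw [GeneralLinearGroup.center_eq_range_scalar, glDiag_self]
    exact ⟨a, rfl⟩

lemma mem_Tpgl_iff {x : PGL2 F} : x ∈ Tpgl F ↔ ∃ a b : Fˣ, (glDiag a b : PGL2 F) = x :=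
  ⟨fun ⟨⟨a, b⟩, hx⟩ ↦ ⟨a, b, hx⟩, fun ⟨a, b, hx⟩ ↦ ⟨(a, b), hx⟩⟩

lemma mk_mem_Tpgl_of_diag {G : GL (Fin 2) F} (h01 : G.val 0 1 = 0) (h10 : G.val 1 0 = 0) :
    (G : PGL2 F) ∈ Tpgl F := by
  have hdet : G.val 0 0 * G.val 1 1 ≠ 0 := by
    simpa [det_fin_two, h01, h10] using (isUnits_det_units G).ne_zero
  refine mem_Tpgl_iff.mpr ⟨Units.mk0 _ (left_ne_zero_of_mul hdet),
    Units.mk0 _ (right_ne_zero_of_mul hdet), congrArg _ (Units.ext ?_)⟩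
  rw [glDiag_val, diagonal_vec2]
  ext i j; fin_cases i <;> fin_cases j <;> simp [h01, h10]

lemma antidiag_mul_glDiag {G : GL (Fin 2) F} (h00 : G.val 0 0 = 0) (h11 : G.val 1 1 = 0)
    (a b : Fˣ) : G * glDiag a b = glDiag b a * G := by
  refine Units.ext ?_
  rw [Units.val_mul, Units.val_mul, glDiag_val, glDiag_val, eta_fin_two G.val, h00, h11]
  ext i j; fin_cases i <;> fin_cases j <;> simp [mul_comm]

lemma mk_mem_normalizer_Tpgl_of_antidiag {G : GL (Fin 2) F} (h00 : G.val 0 0 = 0)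
    (h11 : G.val 1 1 = 0) : (G : PGL2 F) ∈ Subgroup.normalizer (Tpgl F : Set (PGL2 F)) := by
  have hconj : (MulAut.conj (G : PGL2 F) : PGL2 F →* PGL2 F).comp ((mk' _).comp (glDiagHom F)) =
      ((mk' _).comp (glDiagHom F)).comp (MulEquiv.prodComm : Fˣ × Fˣ ≃* Fˣ × Fˣ) := by
    refine MonoidHom.ext fun ⟨a, b⟩ ↦ ?_
    show (G : PGL2 F) * glDiag a b * (G : PGL2 F)⁻¹ = glDiag b a
    rw [← mk_inv, ← mk_mul, ← mk_mul, antidiag_mul_glDiag h00 h11, mul_inv_cancel_right]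
  rw [Subgroup.mem_normalizer_iff_map_conj_eq, Tpgl, MonoidHom.map_range, hconj,
    MonoidHom.range_comp, MulEquiv.range_eq_top, ← MonoidHom.range_eq_map]

lemma mk_mem_normalizer_Tpgl_of_conj {G : GL (Fin 2) F} {a b c d : Fˣ} (hab : a ≠ b)
    (hcd : c ≠ d) (h : MulAut.conj (G : PGL2 F) (glDiag c d) = glDiag a b) :
    (G : PGL2 F) ∈ Subgroup.normalizer (Tpgl F : Set (PGL2 F)) := by
  rw [MulAut.conj_apply, ← mk_inv, ← mk_mul, ← mk_mul] at h
  obtain ⟨z, hz, hGz⟩ := (mk'_eq_mk' _).mp h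
  rw [GeneralLinearGroup.center_eq_range_scalar] at hz
  obtain ⟨u, rfl⟩ := hz
  have hcomm : glDiag a b * G = G * glDiag (c * u) (d * u) := by
    rw [← glDiag_mul_glDiag, glDiag_self, ← hGz, mul_assoc _ _ G,
      GeneralLinearGroup.scalar_commute u G]
    group
  have hval := congrArg Units.val hcomm
  rw [Units.val_mul, Units.val_mul, glDiag_val, glDiag_val] at hval
  rcases fin_two_diag_or_antidiag_of_diagonal_mul_eq_mul_diagonal (isUnits_det_units G).ne_zero
    (Units.val_injective.ne hab) (Units.val_injective.ne ((mul_left_injective u).ne hcd))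
    hval with ⟨h01, h10⟩ | ⟨h00, h11⟩
  · exact Subgroup.le_normalizer (mk_mem_Tpgl_of_diag h01 h10)
  · exact mk_mem_normalizer_Tpgl_of_antidiag h00 h11

end Torus

theorem stmt13 :
    ∀ g : PGL2 F, g ∉ Subgroup.normalizer (Tpgl F : Set (PGL2 F)) →
      Tpgl F ⊓ Subgroup.map (MulAut.conj g).toMonoidHom (Tpgl F) = ⊥ := by
  intro g hg
  rw [Subgroup.eq_bot_iff_forall]
  rintro x ⟨hxT, y, hyT, rfl⟩
  by_contra hx
  obtain ⟨G, rfl⟩ := QuotientGroup.mk_surjective g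
  obtain ⟨a, b, hab⟩ := mem_Tpgl_iff.mp hxT
  obtain ⟨c, d, rfl⟩ := mem_Tpgl_iff.mp hyT
  refine hg (mk_mem_normalizer_Tpgl_of_conj (a := a) (b := b) ?_ ?_ hab.symm)
  · rintro rfl
    exact hx (hab ▸ mk_glDiag_self a)
  · rintro rfl
    exact hx (by simp [mk_glDiag_self])
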